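/- For all i ∈ {1,…,J} and j ∈ {1,…,K}: Σ_{k,ℓ=1}^n c(λ_k,λ_ℓ) ⟨v_k, Pθ_i v_ℓ⟩ ⟨v_ℓ, Pφ_j v_k⟩ = (i/2)·Tr[{Φ_θ(G_i), [G(θ), Ψ_φ†(H_j)]} ρ(θ)]; that is, the Kubo–Mori information matrix elements of the evolved quantum Boltzmann machine with respect to mixed θ and φ parameters are I^KM_{ij}(θ,φ) = (i/2)⟨{Φ_θ(G_i), [G(θ), Ψ_φ†(H_j)]}⟩_{ρ(θ)}. -/

import Mathlib

open MeasureTheory Matrix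

noncomputable section

attribute [local instance] Matrix.normedAddCommGroup Matrix.normedSpace

/-- Square complex matrices. -/
abbrev Mat (n : ℕ) := Matrix (Fin n) (Fin n) ℂ

/-- The parameterized Hamiltonian `G(θ) = ∑ j, θ j • G j`. -/
def Gm {n J : ℕ} (G : Fin J → Mat n) (θ : Fin J → ℝ) : Mat n := ∑ j, (θ j : ℂ) • G j

/-- The parameterized Hamiltonian `H(φ) = ∑ k, φ k • H k`. -/
def Hm {n K : ℕ} (H : Fin K → Mat n) (φ : Fin K → ℝ) : Mat n := ∑ k, (φ k : ℂ) • H k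

/-- The partition function `Z(θ) = Tr[exp (−G(θ))]` (a positive real). -/
def Zpf {n J : ℕ} (G : Fin J → Mat n) (θ : Fin J → ℝ) : ℝ :=
  (Matrix.trace (NormedSpace.exp (-(Gm G θ)))).re

/-- The quantum Boltzmann machine `ρ(θ) = exp(−G(θ))/Z(θ)`. -/
def qbm {n J : ℕ} (G : Fin J → Mat n) (θ : Fin J → ℝ) : Mat n :=
  ((Zpf G θ : ℂ))⁻¹ • NormedSpace.exp (-(Gm G θ))

/-- The unitary `exp(−i H(φ))`. -/
def uH {n K : ℕ} (H : Fin K → Mat n) (φ : Fin K → ℝ) : Mat n :=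
  NormedSpace.exp (-(Complex.I • Hm H φ))

/-- The unitary `exp(i H(φ))`. -/
def uH' {n K : ℕ} (H : Fin K → Mat n) (φ : Fin K → ℝ) : Mat n :=
  NormedSpace.exp (Complex.I • Hm H φ)

/-- The evolved quantum Boltzmann machine `ω(θ,φ) = exp(−iH(φ)) ρ(θ) exp(iH(φ))`. -/
def eqbm {n J K : ℕ} (G : Fin J → Mat n) (H : Fin K → Mat n)
    (θ : Fin J → ℝ) (φ : Fin K → ℝ) : Mat n :=
  uH H φ * qbm G θ * uH' H φ

/-- The high-peak-tent probability density `p(t) = (2/π) ln |coth (π t / 2)|`. -/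
def hpt (t : ℝ) : ℝ :=
  (2 / Real.pi) * Real.log |Real.cosh (Real.pi * t / 2) / Real.sinh (Real.pi * t / 2)|

/-- The channel `Φ_θ(X) = ∫ℝ p(t) exp(−iG(θ)t) X exp(iG(θ)t) dt`. -/
def chanΦ {n J : ℕ} (G : Fin J → Mat n) (θ : Fin J → ℝ) (X : Mat n) : Mat n :=
  ∫ t : ℝ, hpt t •
    (NormedSpace.exp ((-(Complex.I * (t : ℂ))) • Gm G θ) * X *
      NormedSpace.exp ((Complex.I * (t : ℂ)) • Gm G θ))

/-- The channel `Ψ_φ(X) = ∫₀¹ exp(−iH(φ)t) X exp(iH(φ)t) dt`. -/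
def chanΨ {n K : ℕ} (H : Fin K → Mat n) (φ : Fin K → ℝ) (X : Mat n) : Mat n :=
  ∫ t in (0:ℝ)..1,
    (NormedSpace.exp ((-(Complex.I * (t : ℂ))) • Hm H φ) * X *
      NormedSpace.exp ((Complex.I * (t : ℂ)) • Hm H φ))

/-- The adjoint channel `Ψ_φ†(X) = ∫₀¹ exp(iH(φ)t) X exp(−iH(φ)t) dt`. -/
def chanΨdag {n K : ℕ} (H : Fin K → Mat n) (φ : Fin K → ℝ) (X : Mat n) : Mat n :=
  ∫ t in (0:ℝ)..1,
    (NormedSpace.exp ((Complex.I * (t : ℂ)) • Hm H φ) * X *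
      NormedSpace.exp ((-(Complex.I * (t : ℂ))) • Hm H φ))

/-- `⟨x, y⟩ = ∑ m, conj (x m) * y m`. -/
def dotc {n : ℕ} (x y : Fin n → ℂ) : ℂ := ∑ m, (starRingEnd ℂ) (x m) * y m

/-- The eigenvalues `λ_k = exp(−μ_k)/(∑_m exp(−μ_m))` of `ρ(θ)`. -/
def lamd {n : ℕ} (μ : Fin n → ℝ) (k : Fin n) : ℝ := Real.exp (-μ k) / ∑ m, Real.exp (-μ m)

/-- The partial derivative of `ω(θ,φ)` with respect to `θ_j`:
`Pθ_j = −(1/2){exp(−iH(φ)) Φ_θ(G_j) exp(iH(φ)), ω(θ,φ)} + ⟨G_j⟩_{ρ(θ)} ω(θ,φ)`. -/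
def Pθ {n J K : ℕ} (G : Fin J → Mat n) (H : Fin K → Mat n)
    (θ : Fin J → ℝ) (φ : Fin K → ℝ) (j : Fin J) : Mat n :=
  -(1 / 2 : ℂ) •
      (uH H φ * chanΦ G θ (G j) * uH' H φ * eqbm G H θ φ
        + eqbm G H θ φ * (uH H φ * chanΦ G θ (G j) * uH' H φ))
    + Matrix.trace (G j * qbm G θ) • eqbm G H θ φ

/-- The partial derivative of `ω(θ,φ)` with respect to `φ_k`: `Pφ_k = i[ω(θ,φ), Ψ_φ(H_k)]`. -/
def Pφ {n J K : ℕ} (G : Fin J → Mat n) (H : Fin K → Mat n)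
    (θ : Fin J → ℝ) (φ : Fin K → ℝ) (k : Fin K) : Mat n :=
  Complex.I • (eqbm G H θ φ * chanΨ H φ (H k) - chanΨ H φ (H k) * eqbm G H θ φ)

/-- The coefficient `c(x,y) = (ln x − ln y)/(x − y)` for `x ≠ y`, and `c(x,x) = 1/x`. -/
def cKM (x y : ℝ) : ℝ := if x = y then 1 / x else (Real.log x - Real.log y) / (x - y)

/-! Conjugating by `exp(−iH(φ))` undoes the evolution: it turns `Pθ_i` into
`−½{Φ, ρ} + ⟨G_i⟩ ρ` and `Pφ_j` into `i[ρ, A]`, where `Φ = Φ_θ(G_i)` and `A = Ψ_φ†(H_j)`; the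
latter because the substitution `t ↦ 1 − t` carries `exp(iH) Ψ_φ(X) exp(−iH)` to `Ψ_φ†(X)`.
In the eigenbasis `u` of `G(θ)` the `(k, ℓ)` entry of the first is `−½(λ_k + λ_ℓ) Φ_{kℓ}` plus a
diagonal term, and the `(ℓ, k)` entry of the second is `i(λ_ℓ − λ_k) A_{ℓk}`. Since
`λ_k ∝ exp(−μ_k)`, the Kubo–Mori coefficient satisfies
`c(λ_k, λ_ℓ)(λ_k − λ_ℓ) = ln λ_k − ln λ_ℓ = μ_ℓ − μ_k`, which trades the commutator with `ρ` for
the commutator with `G(θ)` and kills the diagonal term. -/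

theorem cKM_mul_sub (x y : ℝ) : cKM x y * (x - y) = Real.log x - Real.log y := by
  unfold cKM
  split_ifs with h
  · simp [h]
  · exact div_mul_cancel₀ _ (sub_ne_zero.2 h)

theorem log_lamd {n : ℕ} (μ : Fin n → ℝ) (k : Fin n) :
    Real.log (lamd μ k) = -μ k - Real.log (∑ m, Real.exp (-μ m)) := by
  have hZ : ∑ m, Real.exp (-μ m) ≠ 0 :=
    (Finset.sum_pos (fun m _ => Real.exp_pos _) ⟨k, Finset.mem_univ k⟩).ne'
  rw [lamd, Real.log_div (Real.exp_ne_zero _) hZ, Real.log_exp]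

theorem cKM_lamd_mul_sub {n : ℕ} (μ : Fin n → ℝ) (k l : Fin n) :
    cKM (lamd μ k) (lamd μ l) * (lamd μ k - lamd μ l) = μ l - μ k := by
  rw [cKM_mul_sub, log_lamd, log_lamd]
  ring

section Diagonal

variable {ι : Type*} [Fintype ι] [DecidableEq ι]

theorem diagonal_mul_sub_mul_diagonal_apply (d : ι → ℂ) (A : Matrix ι ι ℂ) (k l : ι) :
    (diagonal d * A - A * diagonal d) k l = (d k - d l) * A k l := by
  rw [Matrix.sub_apply, diagonal_mul, mul_diagonal]
  ring

theorem trace_mul_diagonal (X : Matrix ι ι ℂ) (p : ι → ℂ) :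
    trace (X * diagonal p) = ∑ k, X k k * p k := by
  simp only [trace, diag_apply, mul_diagonal]

theorem kuboMori_sum_eq_trace_anticomm_comm
    (c : ι → ι → ℂ) (p μ : ι → ℂ) (hc : ∀ k l, c k l * (p k - p l) = μ l - μ k)
    (Φ A : Matrix ι ι ℂ) (g : ℂ) :
    ∑ k, ∑ l, c k l *
        ((-(1 / 2 : ℂ)) • (Φ * diagonal p + diagonal p * Φ) + g • diagonal p) k l *
        (Complex.I • (diagonal p * A - A * diagonal p)) l k
      = Complex.I / 2 *
        trace ((Φ * (diagonal μ * A - A * diagonal μ) + (diagonal μ * A - A * diagonal μ) * Φ)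
          * diagonal p) := by
  have htrace : trace ((Φ * (diagonal μ * A - A * diagonal μ)
        + (diagonal μ * A - A * diagonal μ) * Φ) * diagonal p)
      = ∑ k, ∑ l, Φ k l * A l k * (μ l - μ k) * (p k + p l) := by
    rw [add_mul, trace_add, trace_mul_diagonal, trace_mul_diagonal]
    simp only [mul_apply, diagonal_mul_sub_mul_diagonal_apply, Finset.sum_mul]
    rw [Finset.sum_comm (f := fun k l => (μ k - μ l) * A k l * Φ l k * p k),
      ← Finset.sum_add_distrib]
    refine Finset.sum_congr rfl fun k _ => ?_
    rw [← Finset.sum_add_distrib]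
    refine Finset.sum_congr rfl fun l _ => ?_
    ring
  rw [htrace, Finset.mul_sum]
  refine Finset.sum_congr rfl fun k _ => ?_
  rw [Finset.mul_sum]
  refine Finset.sum_congr rfl fun l _ => ?_
  simp only [Matrix.add_apply, Matrix.smul_apply, diagonal_mul_sub_mul_diagonal_apply,
    mul_diagonal, diagonal_mul, diagonal_apply, smul_eq_mul]
  split_ifs with hkl
  · subst hkl; ring
  · linear_combination (Complex.I / 2 * Φ k l * A l k * (p k + p l)) * hc k l

end Diagonal

theorem ContinuousLinearEquiv.intervalIntegral_comp_comm {𝕜 E F : Type*} [RCLike 𝕜]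
    [NormedAddCommGroup E] [NormedSpace 𝕜 E] [NormedSpace ℝ E]
    [NormedAddCommGroup F] [NormedSpace 𝕜 F] [NormedSpace ℝ F]
    (L : E ≃L[𝕜] F) (f : ℝ → E) (a b : ℝ) :
    ∫ t in a..b, L (f t) = L (∫ t in a..b, f t) := by
  simp only [intervalIntegral, L.integral_comp_comm, map_sub]

theorem exp_smul_mul_exp_smul {n : ℕ} (B : Mat n) (a b : ℂ) :
    NormedSpace.exp (a • B) * NormedSpace.exp (b • B) = NormedSpace.exp ((a + b) • B) := by
  rw [← Matrix.exp_add_of_commute _ _ (((Commute.refl B).smul_left a).smul_right b), add_smul]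

section Evolution

variable {n K : ℕ} (H : Fin K → Mat n) (φ : Fin K → ℝ)

theorem uH'_mul_uH : uH' H φ * uH H φ = 1 := by
  rw [uH, uH', ← neg_smul, exp_smul_mul_exp_smul, add_neg_cancel, zero_smul,
    NormedSpace.exp_zero]

theorem uH'_mul_uH_mul (X : Mat n) : uH' H φ * (uH H φ * X) = X := by
  rw [← mul_assoc, uH'_mul_uH, one_mul]

theorem uH_mul_uH' : uH H φ * uH' H φ = 1 := by
  rw [uH, uH', ← neg_smul, exp_smul_mul_exp_smul, neg_add_cancel, zero_smul,
    NormedSpace.exp_zero]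

theorem isHermitian_Hm (hH : ∀ k, (H k).IsHermitian) : (Hm H φ).IsHermitian :=
  isSelfAdjoint_sum _ fun k _ => (hH k).smul (Complex.conj_ofReal (φ k))

theorem conjTranspose_uH (hH : ∀ k, (H k).IsHermitian) : (uH H φ)ᴴ = uH' H φ := by
  rw [uH, uH', ← Matrix.exp_conjTranspose, conjTranspose_neg, conjTranspose_smul,
    (isHermitian_Hm H φ hH).eq, Complex.star_def, Complex.conj_I, neg_smul, neg_neg]

theorem uH_mem_unitary (hH : ∀ k, (H k).IsHermitian) : uH H φ ∈ unitary (Mat n) :=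
  Unitary.mem_iff.2 ⟨by rw [star_eq_conjTranspose, conjTranspose_uH H φ hH, uH'_mul_uH],
    by rw [star_eq_conjTranspose, conjTranspose_uH H φ hH, uH_mul_uH']⟩

theorem uH'_mul_chanΨ_mul_uH (hH : ∀ k, (H k).IsHermitian) (X : Mat n) :
    uH' H φ * chanΨ H φ X * uH H φ = chanΨdag H φ X := by
  let L : Mat n ≃L[ℂ] Mat n := LinearEquiv.toContinuousLinearEquiv
    (Unitary.conjStarAlgAut ℂ (Mat n) (star ⟨uH H φ, uH_mem_unitary H φ hH⟩)).toAlgEquiv.toLinearEquiv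
  have hL : ∀ Y, L Y = uH' H φ * Y * uH H φ := fun Y =>
    (by simp [L] : L Y = star (uH H φ) * Y * uH H φ).trans
      (by rw [star_eq_conjTranspose, conjTranspose_uH H φ hH])
  have hshift : ∀ t : ℝ, L (NormedSpace.exp ((-(Complex.I * (t : ℂ))) • Hm H φ) * X *
      NormedSpace.exp ((Complex.I * (t : ℂ)) • Hm H φ))
      = NormedSpace.exp ((Complex.I * ((1 - t : ℝ) : ℂ)) • Hm H φ) * X *
          NormedSpace.exp ((-(Complex.I * ((1 - t : ℝ) : ℂ))) • Hm H φ) := fun t => by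
    rw [hL, uH', uH, ← mul_assoc, ← mul_assoc, exp_smul_mul_exp_smul, mul_assoc, ← neg_smul,
      exp_smul_mul_exp_smul]
    push_cast
    ring_nf
  rw [← hL, chanΨ]
  refine ((L.intervalIntegral_comp_comm _ 0 1).symm.trans
    (intervalIntegral.integral_congr fun t _ => hshift t)).trans ?_
  rw [intervalIntegral.integral_comp_sub_left
    (fun t : ℝ => NormedSpace.exp ((Complex.I * (t : ℂ)) • Hm H φ) * X *
      NormedSpace.exp ((-(Complex.I * (t : ℂ))) • Hm H φ)) 1, sub_self, sub_zero, chanΨdag]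

end Evolution

theorem uH'_mul_Pθ_mul_uH {n J K : ℕ} (G : Fin J → Mat n) (H : Fin K → Mat n)
    (θ : Fin J → ℝ) (φ : Fin K → ℝ) (i : Fin J) :
    uH' H φ * Pθ G H θ φ i * uH H φ
      = (-(1 / 2 : ℂ)) • (chanΦ G θ (G i) * qbm G θ + qbm G θ * chanΦ G θ (G i))
        + trace (G i * qbm G θ) • qbm G θ := by
  simp only [Pθ, eqbm, Matrix.mul_add, Matrix.add_mul, Matrix.mul_smul, Matrix.smul_mul,
    mul_assoc, uH'_mul_uH_mul, uH'_mul_uH, mul_one]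

theorem uH'_mul_Pφ_mul_uH {n J K : ℕ} (G : Fin J → Mat n) (H : Fin K → Mat n)
    (hH : ∀ k, (H k).IsHermitian) (θ : Fin J → ℝ) (φ : Fin K → ℝ) (j : Fin K) :
    uH' H φ * Pφ G H θ φ j * uH H φ
      = Complex.I • (qbm G θ * chanΨdag H φ (H j) - chanΨdag H φ (H j) * qbm G θ) := by
  rw [← uH'_mul_chanΨ_mul_uH H φ hH]
  simp only [Pφ, eqbm, Matrix.mul_sub, Matrix.sub_mul, Matrix.mul_smul, Matrix.smul_mul,
    mul_assoc, uH'_mul_uH_mul, uH'_mul_uH, mul_one]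

section Eigenbasis

variable {n : ℕ}

theorem dotc_mulVec_left (U : Mat n) (x y : Fin n → ℂ) :
    dotc (U *ᵥ x) y = dotc x (Uᴴ *ᵥ y) := by
  change star (U *ᵥ x) ⬝ᵥ y = star x ⬝ᵥ (Uᴴ *ᵥ y)
  rw [star_mulVec, dotProduct_mulVec]

theorem dotc_mulVec_eq_apply (u : Fin n → Fin n → ℂ) (M : Mat n) (k l : Fin n) :
    dotc (u k) (M *ᵥ u l) = ((of u)ᵀᴴ * M * (of u)ᵀ) k l := by
  simp only [dotc, mulVec, dotProduct, mul_apply, conjTranspose_apply, transpose_apply, of_apply,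
    Finset.mul_sum, Finset.sum_mul, starRingEnd_apply, mul_assoc]
  exact Finset.sum_comm

theorem transpose_of_mem_unitary (u : Fin n → Fin n → ℂ)
    (hortho : ∀ k l, dotc (u k) (u l) = if k = l then 1 else 0) :
    (of u)ᵀ ∈ unitary (Mat n) := by
  refine Matrix.mem_unitaryGroup_iff'.2 ?_
  ext k l
  simpa [mul_apply, one_apply, dotc] using hortho k l

theorem mul_transpose_of_eq_mul_diagonal (A : Mat n) (u : Fin n → Fin n → ℂ) (μ : Fin n → ℝ)
    (heig : ∀ k, A *ᵥ u k = (μ k : ℂ) • u k) :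
    A * (of u)ᵀ = (of u)ᵀ * diagonal (fun k => (μ k : ℂ)) := by
  ext m k
  rw [mul_diagonal]
  simpa [mul_apply, mulVec, dotProduct, mul_comm] using congrFun (heig k) m

theorem conjTranspose_mul_exp_mul {V : Mat n} (hV : V ∈ unitary (Mat n)) (A : Mat n) :
    Vᴴ * NormedSpace.exp A * V = NormedSpace.exp (Vᴴ * A * V) :=
  (Matrix.exp_units_conj' (Unitary.toUnits ⟨V, hV⟩) A).symm

theorem trace_conjTranspose_mul_mul {V : Mat n} (hV : V ∈ unitary (Mat n)) (A : Mat n) :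
    trace (Vᴴ * A * V) = trace A := by
  rw [trace_mul_cycle, ← star_eq_conjTranspose, Unitary.mul_star_self_of_mem hV, one_mul]

end Eigenbasis

section Spectral

variable {n J : ℕ} (G : Fin J → Mat n) (θ : Fin J → ℝ) (u : Fin n → Fin n → ℂ) (μ : Fin n → ℝ)
  (hortho : ∀ k l, dotc (u k) (u l) = if k = l then 1 else 0)
  (heig : ∀ k, Gm G θ *ᵥ u k = (μ k : ℂ) • u k)
include hortho heig

theorem conj_Gm_eq_diagonal :
    (of u)ᵀᴴ * Gm G θ * (of u)ᵀ = diagonal (fun k => (μ k : ℂ)) := by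
  rw [mul_assoc, mul_transpose_of_eq_mul_diagonal _ u μ heig, ← mul_assoc, ← star_eq_conjTranspose,
    Unitary.star_mul_self_of_mem (transpose_of_mem_unitary u hortho), one_mul]

theorem conj_exp_neg_Gm_eq_diagonal :
    (of u)ᵀᴴ * NormedSpace.exp (-Gm G θ) * (of u)ᵀ
      = diagonal (fun k => (Real.exp (-μ k) : ℂ)) := by
  rw [conjTranspose_mul_exp_mul (transpose_of_mem_unitary u hortho), Matrix.mul_neg,
    Matrix.neg_mul, conj_Gm_eq_diagonal G θ u μ hortho heig, diagonal_neg, exp_diagonal]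
  congr 1
  funext k
  simp [← Complex.exp_eq_exp_ℂ]

theorem Zpf_eq_sum_exp : Zpf G θ = ∑ m, Real.exp (-μ m) := by
  rw [Zpf, ← trace_conjTranspose_mul_mul (transpose_of_mem_unitary u hortho),
    conj_exp_neg_Gm_eq_diagonal G θ u μ hortho heig, trace_diagonal, ← Complex.ofReal_sum,
    Complex.ofReal_re]

theorem conj_qbm_eq_diagonal :
    (of u)ᵀᴴ * qbm G θ * (of u)ᵀ = diagonal (fun k => (lamd μ k : ℂ)) := by
  rw [qbm, Matrix.mul_smul, Matrix.smul_mul, conj_exp_neg_Gm_eq_diagonal G θ u μ hortho heig,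
    Zpf_eq_sum_exp G θ u μ hortho heig, ← diagonal_smul]
  congr 1
  funext k
  simp [lamd, div_eq_inv_mul]

end Spectral

theorem stmt18_general {n J K : ℕ}
    (G : Fin J → Mat n) (H : Fin K → Mat n)
    (hH : ∀ k, (H k).IsHermitian)
    (θ : Fin J → ℝ) (φ : Fin K → ℝ)
    (u : Fin n → Fin n → ℂ) (μ : Fin n → ℝ)
    (hortho : ∀ k l, dotc (u k) (u l) = if k = l then 1 else 0)
    (heig : ∀ k, (Gm G θ).mulVec (u k) = (μ k : ℂ) • u k)
    (i : Fin J) (j : Fin K) :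
    ∑ k, ∑ l, ((cKM (lamd μ k) (lamd μ l) : ℝ) : ℂ) *
        dotc ((uH H φ).mulVec (u k)) ((Pθ G H θ φ i).mulVec ((uH H φ).mulVec (u l))) *
        dotc ((uH H φ).mulVec (u l)) ((Pφ G H θ φ j).mulVec ((uH H φ).mulVec (u k)))
      = Complex.I / 2 *
          Matrix.trace ((chanΦ G θ (G i) *
              (Gm G θ * chanΨdag H φ (H j) - chanΨdag H φ (H j) * Gm G θ)
            + (Gm G θ * chanΨdag H φ (H j) - chanΨdag H φ (H j) * Gm G θ) *
              chanΦ G θ (G i)) * qbm G θ) := by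
  have hV := transpose_of_mem_unitary u hortho
  let κ := Unitary.conjStarAlgAut ℂ (Mat n) (star ⟨(of u)ᵀ, hV⟩)
  have hκ : ∀ X, κ X = (of u)ᵀᴴ * X * (of u)ᵀ := fun X => by simp [κ, star_eq_conjTranspose]
  have hentry : ∀ M k l, dotc (uH H φ *ᵥ u k) (M *ᵥ (uH H φ *ᵥ u l))
      = κ (uH' H φ * M * uH H φ) k l := fun M k l => by
    rw [dotc_mulVec_left, mulVec_mulVec, mulVec_mulVec, conjTranspose_uH H φ hH,
      dotc_mulVec_eq_apply, hκ]
  have hc : ∀ k l, ((cKM (lamd μ k) (lamd μ l) : ℝ) : ℂ) * ((lamd μ k : ℂ) - lamd μ l)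
      = (μ l : ℂ) - μ k := fun k l => by exact_mod_cast cKM_lamd_mul_sub μ k l
  simp_rw [hentry, uH'_mul_Pθ_mul_uH, uH'_mul_Pφ_mul_uH G H hH]
  conv_rhs => rw [← trace_conjTranspose_mul_mul hV, ← hκ]
  have hκρ : κ (qbm G θ) = diagonal (fun k => (lamd μ k : ℂ)) :=
    (hκ _).trans (conj_qbm_eq_diagonal G θ u μ hortho heig)
  have hκG : κ (Gm G θ) = diagonal (fun k => (μ k : ℂ)) :=
    (hκ _).trans (conj_Gm_eq_diagonal G θ u μ hortho heig)
  simp only [map_add, map_sub, map_mul, map_smul, hκρ, hκG]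
  exact kuboMori_sum_eq_trace_anticomm_comm _ _ _ hc _ _ _

/-- Kubo–Mori information matrix elements of the evolved quantum Boltzmann machine with
respect to mixed `θ` and `φ` parameters:
`I^KM_{ij}(θ,φ) = (i/2)⟨{Φ_θ(G_i), [G(θ), Ψ_φ†(H_j)]}⟩_{ρ(θ)}`. -/
theorem stmt18 {n J K : ℕ} (hn : 1 ≤ n) (hJ : 1 ≤ J) (hK : 1 ≤ K)
    (G : Fin J → Mat n) (H : Fin K → Mat n)
    (hG : ∀ j, (G j).IsHermitian) (hH : ∀ k, (H k).IsHermitian)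
    (θ : Fin J → ℝ) (φ : Fin K → ℝ)
    (u : Fin n → Fin n → ℂ) (μ : Fin n → ℝ)
    (hortho : ∀ k l, dotc (u k) (u l) = if k = l then 1 else 0)
    (heig : ∀ k, (Gm G θ).mulVec (u k) = (μ k : ℂ) • u k)
    (i : Fin J) (j : Fin K) :
    ∑ k, ∑ l, ((cKM (lamd μ k) (lamd μ l) : ℝ) : ℂ) *
        dotc ((uH H φ).mulVec (u k)) ((Pθ G H θ φ i).mulVec ((uH H φ).mulVec (u l))) *
        dotc ((uH H φ).mulVec (u l)) ((Pφ G H θ φ j).mulVec ((uH H φ).mulVec (u k)))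
      = Complex.I / 2 *
          Matrix.trace ((chanΦ G θ (G i) *
              (Gm G θ * chanΨdag H φ (H j) - chanΨdag H φ (H j) * Gm G θ)
            + (Gm G θ * chanΨdag H φ (H j) - chanΨdag H φ (H j) * Gm G θ) *
              chanΦ G θ (G i)) * qbm G θ) :=
  stmt18_general G H hH θ φ u μ hortho heig i j
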